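/- Define c(m,n,k,i,j) = Σ_{l=0}^{k} (-1)^l · C(i+j-k, i-l) · C(m-l, k-l) · C(n-k+l, l). If m and n are even, k is even with k ≤ min(m,n), then the central value c(m, n, k, m/2, n/2) is nonzero. Combined with the odd case, for m, n even: c(m,n,k,m/2,n/2) = 0 if and only if k is odd. -/
import Mathlib

open Finset

/-- Integer binomial coefficient: `C(a,b) = 0` when `b < 0` or `b > a`. -/
def ch (a b : ℤ) : ℤ := if 0 ≤ b ∧ b ≤ a then ((a.toNat).choose b.toNat : ℤ) else 0

/-- Clebsch-Gordan sum `c_{m,n,k}(i,j)`. -/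
def cg (m n k i j : ℕ) : ℤ :=
  ∑ l ∈ Finset.range (k+1),
    (-1:ℤ)^l * ch ((i:ℤ)+(j:ℤ)-(k:ℤ)) ((i:ℤ)-(l:ℤ))
      * ch ((m:ℤ)-(l:ℤ)) ((k:ℤ)-(l:ℤ)) * ch ((n:ℤ)-(k:ℤ)+(l:ℤ)) (l:ℤ)

/-- Trinomial coefficient `(a+b+c)! / (a! b! c!)`. -/
def mult (a b c : ℕ) : ℕ := (a+b+c).factorial / (a.factorial * b.factorial * c.factorial)

lemma ch_coe (n m : ℕ) (h : m ≤ n) : ch n m = (n.choose m : ℤ) := by simp [ch, h]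

lemma ch_of_neg {a b : ℤ} (h : b < 0) : ch a b = 0 := by simp [ch]; intro h'; omega

lemma ch_of_gt {a b : ℤ} (h : a < b) : ch a b = 0 := by simp [ch]; intro h'; omega

lemma ch_zero (a : ℤ) (ha : 0 ≤ a) : ch a 0 = 1 := by
  rw [ch, if_pos ⟨le_refl 0, ha⟩]; simp

lemma ch_self (a : ℤ) (ha : 0 ≤ a) : ch a a = 1 := by
  rw [ch, if_pos ⟨ha, le_refl a⟩, Nat.choose_self]; simp

lemma ch_absorb (a b : ℤ) (ha : 0 ≤ a) : b * ch a b = (a + 1 - b) * ch a (b - 1) := by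
  obtain ⟨n, rfl⟩ := Int.eq_ofNat_of_zero_le ha
  by_cases hb : 1 ≤ b ∧ b ≤ n
  · obtain ⟨m, rfl⟩ : ∃ m : ℕ, b = ((m + 1 : ℕ) : ℤ) := ⟨(b-1).toNat, by omega⟩
    have hmn : m + 1 ≤ n := by exact_mod_cast hb.2
    rw [ch_coe n (m+1) hmn, show ((m+1:ℕ):ℤ) - 1 = ((m:ℕ):ℤ) by push_cast; ring,
        ch_coe n m (by omega)]
    have h2 := congrArg (Nat.cast : ℕ → ℤ) (Nat.choose_succ_right_eq n m)
    push_cast [Nat.cast_sub (show m ≤ n by omega)] at h2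
    push_cast
    linarith [h2]
  · rcases not_and_or.mp hb with h | h
    · have hb1 : b ≤ 0 := by omega
      rcases eq_or_lt_of_le hb1 with rfl | h2
      · rw [ch_of_neg (show (0:ℤ)-1 < 0 by omega)]; ring
      · rw [ch_of_neg h2, ch_of_neg (by omega)]; ring
    · have : (n:ℤ) < b := by omega
      rw [ch_of_gt this]
      rcases eq_or_lt_of_le (show (n:ℤ) + 1 ≤ b by omega) with h2 | h2
      · rw [← h2]; ring
      · rw [ch_of_gt (by omega)]; ring

lemma ch_pascal (a b : ℤ) (ha : 0 ≤ a) : ch (a+1) b = ch a (b-1) + ch a b := by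
  obtain ⟨n, rfl⟩ := Int.eq_ofNat_of_zero_le ha
  by_cases hb : 1 ≤ b ∧ b ≤ n + 1
  · obtain ⟨m, rfl⟩ : ∃ m : ℕ, b = ((m + 1 : ℕ) : ℤ) := ⟨(b-1).toNat, by omega⟩
    have hmn : m + 1 ≤ n + 1 := by exact_mod_cast hb.2
    rw [show ((n:ℤ)+1) = ((n+1:ℕ):ℤ) by push_cast; ring,
        ch_coe (n+1) (m+1) hmn, show ((m+1:ℕ):ℤ) - 1 = ((m:ℕ):ℤ) by push_cast; ring,
        ch_coe n m (by omega)]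
    by_cases hmn2 : m + 1 ≤ n
    · rw [ch_coe n (m+1) hmn2, Nat.choose_succ_succ]
      push_cast; ring
    · have hm : m = n := by omega
      subst hm
      rw [ch_of_gt (by exact_mod_cast Nat.lt_succ_self m)]
      simp [Nat.choose_self, Nat.choose_succ_self]
  · rcases not_and_or.mp hb with h | h
    · have hb1 : b ≤ 0 := by omega
      rcases eq_or_lt_of_le hb1 with rfl | h2
      · rw [ch_of_neg (show (0:ℤ)-1 < 0 by omega), ch_zero _ (by omega),
            ch_zero _ (by omega)]
        ring
      · rw [ch_of_neg h2, ch_of_neg (by omega), ch_of_neg (by omega)]; ring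
    · rw [ch_of_gt (by omega), ch_of_gt (by omega), ch_of_gt (by omega)]; ring

lemma ch_top' (a b : ℤ) (ha : 0 ≤ a) : (a+1) * ch a (b-1) = b * ch (a+1) b := by
  linear_combination (-b) * ch_pascal a b ha - ch_absorb a b ha

lemma ch_top (a b : ℤ) (ha : 0 ≤ a) : (a+1) * ch a b = (a+1-b) * ch (a+1) b := by
  linear_combination (-(a+1-b)) * ch_pascal a b ha + ch_absorb a b ha

lemma ch_symm (a b : ℤ) (ha : 0 ≤ a) : ch a b = ch a (a - b) := by
  obtain ⟨n, rfl⟩ := Int.eq_ofNat_of_zero_le ha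
  by_cases hb : 0 ≤ b ∧ b ≤ n
  · obtain ⟨m, rfl⟩ : ∃ m : ℕ, b = (m : ℤ) := ⟨b.toNat, by omega⟩
    have hmn : m ≤ n := by exact_mod_cast hb.2
    rw [ch_coe n m hmn, show ((n:ℤ) - m) = ((n - m : ℕ) : ℤ) by
          push_cast [Nat.cast_sub hmn]; ring,
        ch_coe n (n-m) (Nat.sub_le n m), Nat.choose_symm hmn]
  · rcases not_and_or.mp hb with h | h
    · rw [ch_of_neg (by omega), ch_of_gt (by omega)]
    · rw [ch_of_gt (by omega), ch_of_neg (by omega)]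

lemma term_core (x y z w : ℤ) (hxyz : 0 ≤ x+y-z) (hxw : 0 ≤ 2*x-w)
    (hyzw : 0 ≤ 2*y-z+w) (hzx : z ≤ 2*x) :
    (2*x+2-z) * (ch (x+y+1-z) (x+1-w) * ch (2*x+2-w) (z-w) * ch (2*y-z+w) w)
      - (2*x+2*y+2-z) * (ch (x+y-z) (x-w) * ch (2*x-w) (z-w) * ch (2*y-z+w) w)
    = (w+1) * (ch (x+y-z) (x-w) * ch (2*x-w) (z-w-1) * ch (2*y-z+w+1) (w+1))
      + w * (ch (x+y-z) (x+1-w) * ch (2*x+1-w) (z-w) * ch (2*y-z+w) w) := by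
  have e1 : (2*y-z+w+1) * ch (2*y-z+w) w = (w+1) * ch (2*y-z+w+1) (w+1) := by
    have h := ch_top' (2*y-z+w) (w+1) hyzw
    rw [show (w+1-1 : ℤ) = w by ring] at h
    exact h
  have e2 : (2*x+2-w) * ch (2*x+1-w) (z-w) = (2*x+2-w-(z-w)) * ch (2*x+2-w) (z-w) := by
    have h := ch_top (2*x+1-w) (z-w) (by omega)
    rw [show (2*x+1-w+1 : ℤ) = 2*x+2-w by ring] at h
    exact h
  have e3 : (2*x+1-w) * ch (2*x-w) (z-w) = (2*x+1-w-(z-w)) * ch (2*x+1-w) (z-w) := by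
    have h := ch_top (2*x-w) (z-w) hxw
    rw [show (2*x-w+1 : ℤ) = 2*x+1-w by ring] at h
    exact h
  have e4 : (z-w) * ch (2*x-w) (z-w) = (2*x+1-w-(z-w)) * ch (2*x-w) (z-w-1) := by
    have h := ch_absorb (2*x-w) (z-w) hxw
    rw [show (2*x-w+1-(z-w) : ℤ) = 2*x+1-w-(z-w) by ring] at h
    exact h
  have e5 : ch (x+y+1-z) (x+1-w) = ch (x+y-z) (x-w) + ch (x+y-z) (x+1-w) := by
    have h := ch_pascal (x+y-z) (x+1-w) hxyz
    rw [show (x+y-z+1 : ℤ) = x+y+1-z by ring, show (x+1-w-1 : ℤ) = x-w by ring] at h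
    exact h
  have e6 : (x+1-w) * ch (x+y-z) (x+1-w) = (y-z+w) * ch (x+y-z) (x-w) := by
    have h := ch_absorb (x+y-z) (x+1-w) hxyz
    rw [show (x+1-w-1 : ℤ) = x-w by ring, show (x+y-z+1-(x+1-w) : ℤ) = y-z+w by ring] at h
    exact h
  have hM : ((2*x-z+1)*(2*x-z+2) : ℤ) ≠ 0 := by
    have h1 : (0:ℤ) < 2*x-z+1 := by omega
    have h2 : (0:ℤ) < 2*x-z+2 := by omega
    positivity
  apply mul_left_cancel₀ hM
  linear_combination
    ((2*x-z+1)*(2*x-z+2)) * (ch (x+y-z) (x-w)) * (ch (2*x-w) (z-w-1)) * e1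
    + (-(2*x-z+1)*(2*x+2-z)) * (ch (x+y+1-z) (x+1-w)) * (ch (2*y-z+w) w) * e2
    + ((-(2*x+2-w)*(2*x+2-z)) * (ch (x+y+1-z) (x+1-w)) * (ch (2*y-z+w) w)
        + (2*x-z+2)*w * (ch (x+y-z) (x+1-w)) * (ch (2*y-z+w) w)) * e3
    + ((2*x-z+2)*(2*y-z+w+1)) * (ch (x+y-z) (x-w)) * (ch (2*y-z+w) w) * e4
    + ((2*x+2-z)*(2*x+1-w)*(2*x+2-w)) * (ch (2*y-z+w) w) * (ch (2*x-w) (z-w)) * e5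
    + (2*(2*x-z+2)*(2*x+1-w)) * (ch (2*y-z+w) w) * (ch (2*x-w) (z-w)) * e6

/-- central CG value with `m = 2a`, `n = 2b`. -/
def Tc (a b k : ℕ) : ℤ := cg (2*a) (2*b) k a b

/-- telescoping certificate -/
def Gc (a b k l : ℕ) : ℤ :=
  (-1:ℤ)^(l+1) * (l:ℤ) * ch ((a:ℤ)+(b:ℤ)-(k:ℤ)) ((a:ℤ)+1-(l:ℤ))
    * ch (2*(a:ℤ)+1-(l:ℤ)) ((k:ℤ)-(l:ℤ)) * ch (2*(b:ℤ)-(k:ℤ)+(l:ℤ)) (l:ℤ)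

lemma rec_a (a b k : ℕ) (hka : k ≤ 2*a) (hkb : k ≤ 2*b) :
    (2*(a:ℤ)+2-k) * Tc (a+1) b k = (2*(a:ℤ)+2*(b:ℤ)+2-k) * Tc a b k := by
  rw [← sub_eq_zero]
  unfold Tc cg
  rw [Finset.mul_sum, Finset.mul_sum, ← Finset.sum_sub_distrib]
  have key : ∀ l ∈ Finset.range (k+1),
      (2*(a:ℤ)+2-k) * ((-1:ℤ)^l * ch (((a+1:ℕ):ℤ)+(b:ℤ)-(k:ℤ)) (((a+1:ℕ):ℤ)-(l:ℤ))
          * ch (((2*(a+1):ℕ):ℤ)-(l:ℤ)) ((k:ℤ)-(l:ℤ)) * ch (((2*b:ℕ):ℤ)-(k:ℤ)+(l:ℤ)) (l:ℤ))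
        - (2*(a:ℤ)+2*(b:ℤ)+2-k) * ((-1:ℤ)^l * ch ((a:ℤ)+(b:ℤ)-(k:ℤ)) ((a:ℤ)-(l:ℤ))
          * ch (((2*a:ℕ):ℤ)-(l:ℤ)) ((k:ℤ)-(l:ℤ)) * ch (((2*b:ℕ):ℤ)-(k:ℤ)+(l:ℤ)) (l:ℤ))
      = Gc a b k (l+1) - Gc a b k l := by
    intro l hl
    rw [Finset.mem_range] at hl
    have hl' : l ≤ k := by omega
    have tc := term_core (a:ℤ) (b:ℤ) (k:ℤ) (l:ℤ)
      (by omega) (by omega) (by omega) (by omega)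
    unfold Gc
    push_cast
    ring_nf
    ring_nf at tc
    linear_combination ((-1:ℤ)^l) * tc
  rw [Finset.sum_congr rfl key, Finset.sum_range_sub (Gc a b k)]
  have h0 : Gc a b k 0 = 0 := by unfold Gc; push_cast; ring
  have h1 : Gc a b k (k+1) = 0 := by
    unfold Gc
    rw [ch_of_neg (show ((k:ℤ)-((k+1:ℕ):ℤ)) < 0 by push_cast; omega)]
    ring
  rw [h0, h1]; ring

lemma antisym (a b k : ℕ) (hka : k ≤ 2*a) (hkb : k ≤ 2*b) :
    Tc a b k = (-1:ℤ)^k * Tc b a k := by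
  unfold Tc cg
  rw [Finset.mul_sum, ← Finset.sum_range_reflect]
  apply Finset.sum_congr rfl
  intro j hj
  rw [Finset.mem_range] at hj
  have hj' : j ≤ k := by omega
  rw [show k + 1 - 1 - j = k - j by omega]
  have hcast : ((k - j : ℕ) : ℤ) = (k:ℤ) - (j:ℤ) := by
    push_cast [Nat.cast_sub hj']; ring
  have hsign : (-1:ℤ)^(k-j) = (-1:ℤ)^k * (-1:ℤ)^j := by
    rw [← pow_add, show k + j = (k-j) + 2*j by omega, pow_add, pow_mul]
    norm_num
  have hsymm : ch ((a:ℤ)+(b:ℤ)-(k:ℤ)) ((a:ℤ)-(k:ℤ)+(j:ℤ))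
      = ch ((a:ℤ)+(b:ℤ)-(k:ℤ)) ((b:ℤ)-(j:ℤ)) := by
    have h := ch_symm ((a:ℤ)+(b:ℤ)-(k:ℤ)) ((b:ℤ)-(j:ℤ)) (by omega)
    rw [show ((a:ℤ)+(b:ℤ)-(k:ℤ))-((b:ℤ)-(j:ℤ)) = (a:ℤ)-(k:ℤ)+(j:ℤ) by ring] at h
    exact h.symm
  rw [hcast, hsign]
  push_cast
  rw [show (a:ℤ)-((k:ℤ)-(j:ℤ)) = (a:ℤ)-(k:ℤ)+(j:ℤ) by ring,
      show (k:ℤ)-((k:ℤ)-(j:ℤ)) = (j:ℤ) by ring,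
      show 2*(b:ℤ)-(k:ℤ)+((k:ℤ)-(j:ℤ)) = 2*(b:ℤ)-(j:ℤ) by ring,
      show 2*(a:ℤ)-((k:ℤ)-(j:ℤ)) = 2*(a:ℤ)-(k:ℤ)+(j:ℤ) by ring,
      show (b:ℤ)+(a:ℤ)-(k:ℤ) = (a:ℤ)+(b:ℤ)-(k:ℤ) by ring,
      hsymm]
  ring

lemma base_even (c : ℕ) : Tc c c (2*c) = (-1:ℤ)^c := by
  unfold Tc cg
  rw [Finset.sum_eq_single c]
  · rw [show ((c:ℤ)+(c:ℤ)-((2*c:ℕ):ℤ)) = 0 by push_cast; ring,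
        show ((c:ℤ)-(c:ℤ)) = 0 by ring, ch_zero 0 le_rfl,
        show (((2*c:ℕ)):ℤ)-(c:ℤ) = (c:ℤ) by push_cast; ring,
        show ((2*c:ℕ):ℤ)-((2*c:ℕ):ℤ)+(c:ℤ) = (c:ℤ) by ring,
        ch_self (c:ℤ) (by positivity)]
    ring
  · intro l hl hlc
    rw [Finset.mem_range] at hl
    rw [show ((c:ℤ)+(c:ℤ)-((2*c:ℕ):ℤ)) = 0 by push_cast; ring]
    rcases lt_or_gt_of_ne (show (l:ℤ) ≠ (c:ℤ) by exact_mod_cast hlc) with h | h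
    · rw [ch_of_gt (show (0:ℤ) < (c:ℤ)-(l:ℤ) by omega)]; ring
    · rw [ch_of_neg (show ((c:ℤ)-(l:ℤ)) < 0 by omega)]; ring
  · intro h
    exfalso; apply h; rw [Finset.mem_range]; omega

lemma step (a b k : ℕ) (hka : k ≤ 2*a) (hkb : k ≤ 2*b) :
    (Tc (a+1) b k = 0 ↔ Tc a b k = 0) := by
  have h := rec_a a b k hka hkb
  have c1 : (2*(a:ℤ)+2-k) ≠ 0 := by omega
  have c2 : (2*(a:ℤ)+2*(b:ℤ)+2-k) ≠ 0 := by omega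
  constructor
  · intro h0; rw [h0, mul_zero] at h
    rcases mul_eq_zero.mp h.symm with h' | h'
    · exact absurd h' c2
    · exact h'
  · intro h0; rw [h0, mul_zero] at h
    rcases mul_eq_zero.mp h with h' | h'
    · exact absurd h' c1
    · exact h'

lemma reduce (b k : ℕ) (hkb : k ≤ 2*b) :
    ∀ a, k ≤ 2*a → (Tc a b k = 0 ↔ Tc ((k+1)/2) b k = 0) := by
  intro a hka
  have hc0 : (k+1)/2 ≤ a := by omega
  induction a, hc0 using Nat.le_induction with
  | base => rfl
  | succ a ha ih =>
    have hka' : k ≤ 2*a := by omega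
    rw [step a b k hka' hkb]
    exact ih hka'

lemma main_T (a b k : ℕ) (hka : k ≤ 2*a) (hkb : k ≤ 2*b) :
    (Tc a b k = 0 ↔ Odd k) := by
  have hc0 : k ≤ 2*((k+1)/2) := by omega
  have h2 : Tc ((k+1)/2) b k = 0 ↔ Tc b ((k+1)/2) k = 0 := by
    rw [antisym ((k+1)/2) b k hc0 hkb]
    constructor
    · intro h
      rcases mul_eq_zero.mp h with h' | h'
      · exact absurd h' (pow_ne_zero k (by norm_num))
      · exact h'
    · intro h; rw [h, mul_zero]
  have hz : Tc a b k = 0 ↔ Tc ((k+1)/2) ((k+1)/2) k = 0 :=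
    Iff.trans (reduce b k hkb a hka) (Iff.trans h2 (reduce ((k+1)/2) k hc0 b hkb))
  rcases Nat.even_or_odd k with he | ho
  · obtain ⟨c, hc⟩ := he
    have hcc : (k+1)/2 = c := by omega
    rw [hcc] at hz
    have hb := base_even c
    rw [show 2*c = k by omega] at hb
    have hne : Tc c c k ≠ 0 := by
      rw [hb]; exact pow_ne_zero c (by norm_num)
    exact iff_of_false (fun h => hne (hz.mp h)) (Nat.not_odd_iff_even.mpr ⟨c, hc⟩)
  · have ha := antisym ((k+1)/2) ((k+1)/2) k hc0 hc0
    rw [Odd.neg_one_pow ho] at ha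
    have hzero : Tc ((k+1)/2) ((k+1)/2) k = 0 := by linarith [ha]
    exact iff_of_true (hz.mpr hzero) ho

theorem stmt_10 (m n k : ℕ) (hm : Even m) (hn : Even n)
    (hkm : k ≤ m) (hkn : k ≤ n) :
    cg m n k (m/2) (n/2) = 0 ↔ Odd k := by
  obtain ⟨a, rfl⟩ := hm
  obtain ⟨b, rfl⟩ := hn
  have ha2 : a + a = 2*a := by ring
  have hb2 : b + b = 2*b := by ring
  have hda : (a+a)/2 = a := by omega
  have hdb : (b+b)/2 = b := by omega
  rw [hda, hdb, ha2, hb2]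
  exact main_T a b k (by omega) (by omega)
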